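/- arXiv:1910.03859 — 4 statements merged into one kernel-verified Lean document; each statement's English description precedes it below -/
import Mathlib

section
/- Let k be a field and λ ∈ k with λ ≠ 0 and λ ≠ 1. Set z = x − y², z' = x − λy², F = x·z·z' in k[x,y]. Let Q_a(2) be the 6×6 matrix over k[x,y] with rows (z, 0, 0, 0, 0, 0), (0, xz, 0, 0, 0, 0), (0, 0, xz, 0, 0, 0), (−xy, 0, 0, xz', 0, 0), (0, −xy, 0, 0, xz', 0), (0, 0, −xy, 0, 0, xz'). Then there exists a 6×6 matrix B over k[x,y] such that Q_a(2)·B = B·Q_a(2) = F·I₆; that is, (Q_a(2), B) is a matrix factorization of F. -/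
/-!
In the coordinate order `(e₀, e₃), (e₁, e₄), (e₂, e₅)`, `Q_a(2)` is a direct sum of the 2×2 lower
triangular matrices `!![z, 0; -x y, x z']` and (twice) `!![x z, 0; -x y, x z']`, which are matrix
factorizations of `F = x z z'` with cofactors `!![x z', 0; x y, z]` and `!![z', 0; y, z]`.
-/

open MvPolynomial

noncomputable section

namespace T36

variable {k : Type} [Field k]

/-- `x = X 0` in `k[x,y]`. -/
def x : MvPolynomial (Fin 2) k := X 0
/-- `y = X 1` in `k[x,y]`. -/
def y : MvPolynomial (Fin 2) k := X 1
/-- `z = x - y²`. -/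
def z : MvPolynomial (Fin 2) k := x - y ^ 2
/-- `z' = x - λ y²`. -/
def z' (lam : k) : MvPolynomial (Fin 2) k := x - C lam * y ^ 2
/-- `F = x z z'`. -/
def F (lam : k) : MvPolynomial (Fin 2) k := x * z * z' lam

/-- The matrix `Q_a(2)`. -/
def Qa2 (lam : k) : Matrix (Fin 6) (Fin 6) (MvPolynomial (Fin 2) k) :=
  !![z, 0, 0, 0, 0, 0;
     0, x * z, 0, 0, 0, 0;
     0, 0, x * z, 0, 0, 0;
     -(x * y), 0, 0, x * z' lam, 0, 0;
     0, -(x * y), 0, 0, x * z' lam, 0;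
     0, 0, -(x * y), 0, 0, x * z' lam]

end T36

open Matrix

section MatrixFactorization

variable {n m R : Type*} [Fintype n] [DecidableEq n] [Fintype m] [DecidableEq m] [CommRing R]

def IsMatrixFactorization (f : R) (A B : Matrix n n R) : Prop :=
  A * B = f • 1 ∧ B * A = f • 1

theorem IsMatrixFactorization.reindex {f : R} {A B : Matrix n n R} (e : n ≃ m)
    (h : IsMatrixFactorization f A B) :
    IsMatrixFactorization f (reindex e e A) (reindex e e B) := by
  simp only [IsMatrixFactorization, ← coe_reindexAlgEquiv R R, ← map_mul, h.1, h.2, map_smul,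
    map_one, and_self]

theorem fromBlocks_diagonal_mul_fromBlocks_diagonal_eq_smul_one {f : R}
    {a c d a' c' d' : n → R} (ha : ∀ i, a i * a' i = f) (hd : ∀ i, d i * d' i = f)
    (hc : ∀ i, c i * a' i + d i * c' i = 0) :
    fromBlocks (diagonal a) 0 (diagonal c) (diagonal d) *
      fromBlocks (diagonal a') 0 (diagonal c') (diagonal d') = f • 1 := by
  simp only [fromBlocks_multiply, diagonal_mul_diagonal, ha, hd, diagonal_add, hc,
    mul_zero, zero_mul, add_zero, zero_add, diagonal_zero, ← smul_one_eq_diagonal, ← fromBlocks_one,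
    fromBlocks_smul, smul_zero]

theorem isMatrixFactorization_fromBlocks_diagonal {f : R} {a c d a' c' d' : n → R}
    (ha : ∀ i, a i * a' i = f) (hd : ∀ i, d i * d' i = f)
    (hc : ∀ i, c i * a' i + d i * c' i = 0) (hc' : ∀ i, c' i * a i + d' i * c i = 0) :
    IsMatrixFactorization f (fromBlocks (diagonal a) 0 (diagonal c) (diagonal d))
      (fromBlocks (diagonal a') 0 (diagonal c') (diagonal d')) :=
  ⟨fromBlocks_diagonal_mul_fromBlocks_diagonal_eq_smul_one ha hd hc,
    fromBlocks_diagonal_mul_fromBlocks_diagonal_eq_smul_one (fun i => (mul_comm ..).trans (ha i))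
      (fun i => (mul_comm ..).trans (hd i)) hc'⟩

end MatrixFactorization

namespace T36

variable {k : Type} [Field k]

theorem Qa2_eq_reindex_fromBlocks (lam : k) :
    Qa2 lam = reindex finSumFinEquiv finSumFinEquiv
      (fromBlocks (diagonal ![z, x * z, x * z]) 0 (diagonal fun _ => -(x * y))
        (diagonal fun _ => x * z' lam)) := by
  ext i j
  fin_cases i <;> fin_cases j <;> rfl

def Qa2Cofactor (lam : k) : Matrix (Fin 6) (Fin 6) (MvPolynomial (Fin 2) k) :=
  reindex finSumFinEquiv finSumFinEquiv
    (fromBlocks (diagonal ![x * z' lam, z' lam, z' lam]) 0 (diagonal ![x * y, y, y])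
      (diagonal fun _ => z))

theorem isMatrixFactorization_Qa2 (lam : k) :
    IsMatrixFactorization (F lam) (Qa2 lam) (Qa2Cofactor lam) := by
  rw [Qa2_eq_reindex_fromBlocks]
  refine IsMatrixFactorization.reindex _ (isMatrixFactorization_fromBlocks_diagonal ?_ ?_ ?_ ?_) <;>
    intro i <;> fin_cases i <;>
    simp only [Fin.zero_eta, Fin.mk_one, Fin.reduceFinMk, cons_val_zero, cons_val_one, cons_val, F] <;>
    ring

end T36

theorem T36_Qa2_matrix_factorization_general (k : Type) [Field k] (lam : k) :
    ∃ B : Matrix (Fin 6) (Fin 6) (MvPolynomial (Fin 2) k),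
      T36.Qa2 lam * B = T36.F lam • (1 : Matrix (Fin 6) (Fin 6) (MvPolynomial (Fin 2) k)) ∧
      B * T36.Qa2 lam = T36.F lam • (1 : Matrix (Fin 6) (Fin 6) (MvPolynomial (Fin 2) k)) :=
  ⟨T36.Qa2Cofactor lam, T36.isMatrixFactorization_Qa2 lam⟩

theorem T36_Qa2_matrix_factorization (k : Type) [Field k] (lam : k)
    (h0 : lam ≠ 0) (h1 : lam ≠ 1) :
    ∃ B : Matrix (Fin 6) (Fin 6) (MvPolynomial (Fin 2) k),
      T36.Qa2 lam * B = T36.F lam • (1 : Matrix (Fin 6) (Fin 6) (MvPolynomial (Fin 2) k)) ∧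
      B * T36.Qa2 lam = T36.F lam • (1 : Matrix (Fin 6) (Fin 6) (MvPolynomial (Fin 2) k)) :=
  T36_Qa2_matrix_factorization_general k lam
end
end

section
/- Let k be a field and λ ∈ k with λ ≠ 0 and λ ≠ 1. Set z = x − y², z' = x − λy², F = x·z·z' in k[x,y]. Let Q be the 5×5 matrix over k[x,y] obtained from Q_a(2) by deleting its last row and last column, namely the matrix with rows (z, 0, 0, 0, 0), (0, xz, 0, 0, 0), (0, 0, xz, 0, 0), (−xy, 0, 0, xz', 0), (0, −xy, 0, 0, xz'). Then there exists a 5×5 matrix B over k[x,y] such that Q·B = B·Q = F·I₅; that is, (Q, B) is a matrix factorization of F (corresponding to the word r₃ − ã₂ ∼ a₂). -/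
open MvPolynomial

noncomputable section

namespace T36

variable {k : Type} [Field k]

/-- The matrix obtained from `Q_a(2)` by deleting its last row and last column
(corresponding to the word `r₃ − ã₂ ∼ a₂`). -/
def Qa2del6 (lam : k) : Matrix (Fin 5) (Fin 5) (MvPolynomial (Fin 2) k) :=
  !![z, 0, 0, 0, 0;
     0, x * z, 0, 0, 0;
     0, 0, x * z, 0, 0;
     -(x * y), 0, 0, x * z' lam, 0;
     0, -(x * y), 0, 0, x * z' lam]

/-- `F • Qa2del6⁻¹`, computed over the fraction field. Up to reordering the basis, `Qa2del6` is
the direct sum of `(x z)` and two lower triangular blocks `[[a, 0], [c, d]]` with `a ∣ F`, `d ∣ F`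
and `a d ∣ c F`, so `F` times the inverse of each block has polynomial entries. -/
def Qa2del6Partner (lam : k) : Matrix (Fin 5) (Fin 5) (MvPolynomial (Fin 2) k) :=
  !![x * z' lam, 0, 0, 0, 0;
     0, z' lam, 0, 0, 0;
     0, 0, z' lam, 0, 0;
     x * y, 0, 0, z, 0;
     0, y, 0, 0, z]

theorem Qa2del6_mul_partner (lam : k) :
    Qa2del6 lam * Qa2del6Partner lam = F lam • (1 : Matrix (Fin 5) (Fin 5) _) := by
  ext i j : 1
  fin_cases i <;> fin_cases j <;>
    simp [Qa2del6, Qa2del6Partner, F, Matrix.mul_apply, Fin.sum_univ_succ] <;> ring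

theorem partner_mul_Qa2del6 (lam : k) :
    Qa2del6Partner lam * Qa2del6 lam = F lam • (1 : Matrix (Fin 5) (Fin 5) _) := by
  ext i j : 1
  fin_cases i <;> fin_cases j <;>
    simp [Qa2del6, Qa2del6Partner, F, Matrix.mul_apply, Fin.sum_univ_succ] <;> ring

end T36

theorem T36_Qa2_del_last_matrix_factorization_general (k : Type) [Field k] (lam : k) :
    ∃ B : Matrix (Fin 5) (Fin 5) (MvPolynomial (Fin 2) k),
      T36.Qa2del6 lam * B = T36.F lam • (1 : Matrix (Fin 5) (Fin 5) (MvPolynomial (Fin 2) k)) ∧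
      B * T36.Qa2del6 lam = T36.F lam • (1 : Matrix (Fin 5) (Fin 5) (MvPolynomial (Fin 2) k)) :=
  ⟨T36.Qa2del6Partner lam, T36.Qa2del6_mul_partner lam, T36.partner_mul_Qa2del6 lam⟩

theorem T36_Qa2_del_last_matrix_factorization (k : Type) [Field k] (lam : k)
    (h0 : lam ≠ 0) (h1 : lam ≠ 1) :
    ∃ B : Matrix (Fin 5) (Fin 5) (MvPolynomial (Fin 2) k),
      T36.Qa2del6 lam * B = T36.F lam • (1 : Matrix (Fin 5) (Fin 5) (MvPolynomial (Fin 2) k)) ∧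
      B * T36.Qa2del6 lam = T36.F lam • (1 : Matrix (Fin 5) (Fin 5) (MvPolynomial (Fin 2) k)) :=
  T36_Qa2_del_last_matrix_factorization_general k lam
end
end

section
/- Let k be a field and λ ∈ k with λ ≠ 0 and λ ≠ 1. Set z = x − y², z' = x − λy², F = x·z·z' in k[x,y]. Let Q_b(2) be the 6×6 matrix over k[x,y] with rows (x, 0, 0, 0, 0, 0), (0, xz, 0, 0, 0, 0), (0, 0, xz, 0, 0, 0), (−xy, −xy, 0, xz', 0, 0), (0, 0, xy, 0, xz', 0), (−zy, −zy, zy, zz', zz', zz'). Then there exists a 6×6 matrix B over k[x,y] such that Q_b(2)·B = B·Q_b(2) = F·I₆; that is, (Q_b(2), B) is a matrix factorization of F. -/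
open MvPolynomial

noncomputable section

namespace T36

variable {k : Type} [Field k]

/-- The matrix `Q_b(2)`. -/
def Qb2 (lam : k) : Matrix (Fin 6) (Fin 6) (MvPolynomial (Fin 2) k) :=
  !![x, 0, 0, 0, 0, 0;
     0, x * z, 0, 0, 0, 0;
     0, 0, x * z, 0, 0, 0;
     -(x * y), -(x * y), 0, x * z' lam, 0, 0;
     0, 0, x * y, 0, x * z' lam, 0;
     -(z * y), -(z * y), z * y, z * z' lam, z * z' lam, z * z' lam]

end T36

/-! `Q_b(2)` is lower triangular and each of its diagonal entries divides `F`, so `F • Q_b(2)⁻¹`,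
computed over the fraction field, has polynomial entries: it is `Qb2Complement`. Only
`Q_b(2) * B = F • 1` has to be checked by hand, since over a domain `A * B = c • 1` with `c ≠ 0`
forces `B * A = c • 1` (cancel `A` through its adjugate). -/

namespace Matrix

variable {n R : Type*} [Fintype n] [DecidableEq n] [CommRing R] [IsDomain R]

theorem mul_eq_smul_one_comm {A B : Matrix n n R} {c : R} (hc : c ≠ 0) (h : A * B = c • 1) :
    B * A = c • 1 := by
  have hdet : A.det ≠ 0 := by
    have : A.det * B.det = c ^ Fintype.card n := by
      rw [← det_mul, h, det_smul, det_one, mul_one]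
    exact left_ne_zero_of_mul (this ▸ pow_ne_zero _ hc)
  have hA : A * (B * A) = A * (c • 1) := by
    rw [← Matrix.mul_assoc, h, smul_mul, Matrix.one_mul, Matrix.mul_smul, Matrix.mul_one]
  have cancel (M : Matrix n n R) : A.adjugate * (A * M) = A.det • M := by
    rw [← Matrix.mul_assoc, adjugate_mul, smul_mul, Matrix.one_mul]
  refine smul_right_injective (Matrix n n R) hdet ?_
  simp only [← cancel, hA]

end Matrix

namespace T36

variable {k : Type} [Field k]

def Qb2Complement (lam : k) : Matrix (Fin 6) (Fin 6) (MvPolynomial (Fin 2) k) :=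
  !![z * z' lam, 0, 0, 0, 0, 0;
     0, z' lam, 0, 0, 0, 0;
     0, 0, z' lam, 0, 0, 0;
     y * z, y, 0, z, 0, 0;
     0, 0, -y, 0, z, 0;
     0, 0, 0, -z, -z, x]

theorem F_ne_zero (lam : k) : F lam ≠ 0 := fun h => by
  simpa [F, x, z, z', y] using congrArg (eval ![1, 0]) h

theorem Qb2_mul_Qb2Complement (lam : k) : Qb2 lam * Qb2Complement lam = F lam • 1 := by
  ext i j : 1
  fin_cases i <;> fin_cases j <;>
    simp [Qb2, Qb2Complement, F, Matrix.mul_apply, Fin.sum_univ_succ] <;> ring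

end T36

theorem T36_Qb2_matrix_factorization_general (k : Type) [Field k] (lam : k) :
    ∃ B : Matrix (Fin 6) (Fin 6) (MvPolynomial (Fin 2) k),
      T36.Qb2 lam * B = T36.F lam • (1 : Matrix (Fin 6) (Fin 6) (MvPolynomial (Fin 2) k)) ∧
      B * T36.Qb2 lam = T36.F lam • (1 : Matrix (Fin 6) (Fin 6) (MvPolynomial (Fin 2) k)) :=
  ⟨T36.Qb2Complement lam, T36.Qb2_mul_Qb2Complement lam,
    Matrix.mul_eq_smul_one_comm (T36.F_ne_zero lam) (T36.Qb2_mul_Qb2Complement lam)⟩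

theorem T36_Qb2_matrix_factorization (k : Type) [Field k] (lam : k)
    (h0 : lam ≠ 0) (h1 : lam ≠ 1) :
    ∃ B : Matrix (Fin 6) (Fin 6) (MvPolynomial (Fin 2) k),
      T36.Qb2 lam * B = T36.F lam • (1 : Matrix (Fin 6) (Fin 6) (MvPolynomial (Fin 2) k)) ∧
      B * T36.Qb2 lam = T36.F lam • (1 : Matrix (Fin 6) (Fin 6) (MvPolynomial (Fin 2) k)) :=
  T36_Qb2_matrix_factorization_general k lam
end
end

section
/- Let k be a field and λ ∈ k with λ ≠ 0 and λ ≠ 1. Set z = x − y², z' = x − λy², F = x·z·z' in k[x,y]. Let Q_c'(2) be the 8×8 matrix over k[x,y] with rows (x, 0, 0, 0, 0, 0, 0, 0), (0, z, 0, 0, 0, 0, 0, 0), (0, 0, xz, 0, 0, 0, 0, 0), (0, 0, 0, xz, 0, 0, 0, 0), (0, 0, 0, 0, xzz', 0, 0, 0), (0, 0, 0, −xy, 0, xz', 0, 0), (0, 0, −xy, 0, 0, 0, xz', 0), (−xy, −xy, 0, 0, −xyz', 0, 0, xz'). Then there exists an 8×8 matrix B over k[x,y] such that Q_c'(2)·B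 = B·Q_c'(2) = F·I₈; that is, (Q_c'(2), B) is a matrix factorization of F. -/
open MvPolynomial

noncomputable section

namespace T36

variable {k : Type} [Field k]

/-- The matrix `Q_c'(2)`. -/
def Qc'2 (lam : k) : Matrix (Fin 8) (Fin 8) (MvPolynomial (Fin 2) k) :=
  !![x, 0, 0, 0, 0, 0, 0, 0;
     0, z, 0, 0, 0, 0, 0, 0;
     0, 0, x * z, 0, 0, 0, 0, 0;
     0, 0, 0, x * z, 0, 0, 0, 0;
     0, 0, 0, 0, x * z * z' lam, 0, 0, 0;
     0, 0, 0, -(x * y), 0, x * z' lam, 0, 0;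
     0, 0, -(x * y), 0, 0, 0, x * z' lam, 0;
     -(x * y), -(x * y), 0, 0, -(x * y * z' lam), 0, 0, x * z' lam]

end T36


/-!
`Q_c'(2)` is lower triangular with diagonal `(x, z, xz, xz, xzz', xz', xz', xz')`, so over the
fraction field `F • Q⁻¹` is found by forward substitution; all its entries turn out to be
polynomials. Both products with it are then formal identities in the four atoms `x, y, z, z'`.
-/

namespace T36

variable {R : Type*} [CommRing R] {n : Type*} [Fintype n] [DecidableEq n]

def IsMatrixFactorization (f : R) (A B : Matrix n n R) : Prop :=
  A * B = f • 1 ∧ B * A = f • 1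

def qMatrix (x y z w : R) : Matrix (Fin 8) (Fin 8) R :=
  !![x, 0, 0, 0, 0, 0, 0, 0;
     0, z, 0, 0, 0, 0, 0, 0;
     0, 0, x * z, 0, 0, 0, 0, 0;
     0, 0, 0, x * z, 0, 0, 0, 0;
     0, 0, 0, 0, x * z * w, 0, 0, 0;
     0, 0, 0, -(x * y), 0, x * w, 0, 0;
     0, 0, -(x * y), 0, 0, 0, x * w, 0;
     -(x * y), -(x * y), 0, 0, -(x * y * w), 0, 0, x * w]

def qPartner (x y z w : R) : Matrix (Fin 8) (Fin 8) R :=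
  !![z * w, 0, 0, 0, 0, 0, 0, 0;
     0, x * w, 0, 0, 0, 0, 0, 0;
     0, 0, w, 0, 0, 0, 0, 0;
     0, 0, 0, w, 0, 0, 0, 0;
     0, 0, 0, 0, 1, 0, 0, 0;
     0, 0, 0, y, 0, z, 0, 0;
     0, 0, y, 0, 0, 0, z, 0;
     y * z, x * y, 0, 0, y, 0, 0, z]

theorem isMatrixFactorization_qMatrix_qPartner (x y z w : R) :
    IsMatrixFactorization (x * z * w) (qMatrix x y z w) (qPartner x y z w) := by
  constructor <;>
  · ext i j
    fin_cases i <;> fin_cases j <;>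
      simp [qMatrix, qPartner, Matrix.mul_apply, Fin.sum_univ_eight] <;> ring

end T36

theorem T36_Qc'2_matrix_factorization_general (k : Type) [Field k] (lam : k) :
    ∃ B : Matrix (Fin 8) (Fin 8) (MvPolynomial (Fin 2) k),
      T36.Qc'2 lam * B = T36.F lam • (1 : Matrix (Fin 8) (Fin 8) (MvPolynomial (Fin 2) k)) ∧
      B * T36.Qc'2 lam = T36.F lam • (1 : Matrix (Fin 8) (Fin 8) (MvPolynomial (Fin 2) k)) :=
  ⟨_, T36.isMatrixFactorization_qMatrix_qPartner T36.x T36.y T36.z (T36.z' lam)⟩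

theorem T36_Qc'2_matrix_factorization (k : Type) [Field k] (lam : k)
    (h0 : lam ≠ 0) (h1 : lam ≠ 1) :
    ∃ B : Matrix (Fin 8) (Fin 8) (MvPolynomial (Fin 2) k),
      T36.Qc'2 lam * B = T36.F lam • (1 : Matrix (Fin 8) (Fin 8) (MvPolynomial (Fin 2) k)) ∧
      B * T36.Qc'2 lam = T36.F lam • (1 : Matrix (Fin 8) (Fin 8) (MvPolynomial (Fin 2) k)) :=
  T36_Qc'2_matrix_factorization_general k lam
end
end
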